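/- arXiv:1803.11139 — 2 statements merged into one kernel-verified Lean document; each statement's English description precedes it below -/
import Mathlib

section
/- In a sequential product space, if p and a are both sharp effects and p & a = a & p, then p & a is sharp and is the greatest lower bound of p and a among effects. -/
open scoped BigOperators

/-- A sequential product space: an order unit space `(V, ≤, unit)` with a binary
operation `seq` on its effects satisfying axioms (S1)-(S7). -/
structure SPS (V : Type*) [NormedAddCommGroup V] [NormedSpace ℝ V] [PartialOrder V] where
  unit : V
  seq : V → V → V
  /-- The effects: elements `a` with `0 ≤ a ≤ unit`. -/
  Eff : V → Prop
  eff_iff : ∀ a : V, Eff a ↔ 0 ≤ a ∧ a ≤ unit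
  eff_unit : Eff unit
  /-- `V` is an ordered vector space. -/
  add_le_add_right' : ∀ a b c : V, a ≤ b → a + c ≤ b + c
  smul_le_smul' : ∀ (r : ℝ) (a b : V), 0 ≤ r → a ≤ b → r • a ≤ r • b
  /-- `unit` is a strong unit. -/
  strong : ∀ a : V, ∃ n : ℕ, -((n : ℝ) • unit) ≤ a ∧ a ≤ (n : ℝ) • unit
  /-- Archimedean property. -/
  arch : ∀ a : V, (∀ n : ℕ, a ≤ ((n : ℝ) + 1)⁻¹ • unit) → a ≤ 0
  /-- The norm of `V` is the order-unit norm. -/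
  norm_def : ∀ a : V, ‖a‖ = sInf {r : ℝ | 0 ≤ r ∧ -(r • unit) ≤ a ∧ a ≤ r • unit}
  seq_eff : ∀ a b : V, Eff a → Eff b → Eff (seq a b)
  /-- (S1) additivity in the second argument. -/
  s1 : ∀ a b c : V, Eff a → Eff b → Eff c → Eff (b + c) →
      seq a (b + c) = seq a b + seq a c
  /-- (S2) norm-continuity in the first argument. -/
  s2 : ∀ b : V, Eff b → ContinuousOn (fun a => seq a b) {a : V | Eff a}
  /-- (S3) unitality. -/
  s3 : ∀ a : V, Eff a → seq unit a = a
  /-- (S4) orthogonal effects are compatible. -/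
  s4 : ∀ a b : V, Eff a → Eff b → seq a b = 0 → seq b a = 0
  /-- (S5) associativity for compatible effects. -/
  s5 : ∀ a b c : V, Eff a → Eff b → Eff c → seq a b = seq b a →
      seq a (seq b c) = seq (seq a b) c
  /-- (S6) compatibility is preserved by complements. -/
  s6a : ∀ a b : V, Eff a → Eff b → seq a b = seq b a →
      seq a (unit - b) = seq (unit - b) a
  /-- (S6) compatibility is preserved by sums. -/
  s6b : ∀ a b c : V, Eff a → Eff b → Eff c → Eff (b + c) →
      seq a b = seq b a → seq a c = seq c a → seq a (b + c) = seq (b + c) a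
  /-- (S7) compatibility is preserved by the product. -/
  s7 : ∀ a b c : V, Eff a → Eff b → Eff c →
      seq a b = seq b a → seq a c = seq c a → seq a (seq b c) = seq (seq b c) a

namespace SPS

variable {V : Type*} [NormedAddCommGroup V] [NormedSpace ℝ V] [PartialOrder V]

/-- `a` and `b` are compatible: `a & b = b & a`. -/
def Compat (S : SPS V) (a b : V) : Prop := S.seq a b = S.seq b a

/-- An effect `p` is sharp when the only effect below both `p` and `unit - p` is `0`. -/
def Sharp (S : SPS V) (p : V) : Prop :=
  S.Eff p ∧ ∀ b : V, S.Eff b → b ≤ p → b ≤ S.unit - p → b = 0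

/-- An effect `p` is sharp (idempotence formulation): `p & p = p`. -/
def SharpI (S : SPS V) (p : V) : Prop := S.Eff p ∧ S.seq p p = p

/-- An effect `p` is atomic when `p ≠ 0` and every effect below `p` is a multiple of `p`. -/
def Atomic (S : SPS V) (p : V) : Prop :=
  S.Eff p ∧ p ≠ 0 ∧ ∀ a : V, S.Eff a → a ≤ p → ∃ t : ℝ, 0 ≤ t ∧ t ≤ 1 ∧ a = t • p

/-- `c` is the least sharp effect above `a` (the ceiling `⌈a⌉`). -/
def IsCeil (S : SPS V) (a c : V) : Prop :=
  S.SharpI c ∧ a ≤ c ∧ ∀ d : V, S.SharpI d → a ≤ d → c ≤ d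

/-- `f` is the greatest sharp effect below `a` (the floor `⌊a⌋`). -/
def IsFloor (S : SPS V) (a f : V) : Prop :=
  S.SharpI f ∧ f ≤ a ∧ ∀ d : V, S.SharpI d → d ≤ a → d ≤ f

end SPS

section Helpers

variable {V : Type*} [NormedAddCommGroup V] [NormedSpace ℝ V] [PartialOrder V] (S : SPS V)
include S

private lemma addR {a b : V} (c : V) (h : a ≤ b) : a + c ≤ b + c :=
  S.add_le_add_right' a b c h

private lemma subNN {a b : V} (h : a ≤ b) : 0 ≤ b - a := by
  have := addR S (-a) h; simpa [sub_eq_add_neg] using this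

private lemma leOfSubNN {a b : V} (h : 0 ≤ b - a) : a ≤ b := by
  have := addR S a h; simpa using this

private lemma unit_nonneg : (0 : V) ≤ S.unit := ((S.eff_iff S.unit).1 S.eff_unit).1

private lemma eff0 : S.Eff 0 := (S.eff_iff 0).2 ⟨le_refl 0, unit_nonneg S⟩

private lemma eff_nonneg {a : V} (h : S.Eff a) : 0 ≤ a := ((S.eff_iff a).1 h).1

private lemma eff_le_unit {a : V} (h : S.Eff a) : a ≤ S.unit := ((S.eff_iff a).1 h).2

private lemma effSub {a b : V} (hA : S.Eff a) (hB : S.Eff b) (h : b ≤ a) :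
    S.Eff (a - b) := by
  refine (S.eff_iff _).2 ⟨subNN S h, ?_⟩
  refine le_trans (leOfSubNN S ?_) (eff_le_unit S hA)
  have : a - (a - b) = b := by abel
  rw [this]; exact eff_nonneg S hB

private lemma effCompl {a : V} (hA : S.Eff a) : S.Eff (S.unit - a) :=
  effSub S S.eff_unit hA (eff_le_unit S hA)

private lemma seq_zero {a : V} (hA : S.Eff a) : S.seq a 0 = 0 := by
  have h1 : S.seq a (0 + 0) = S.seq a 0 + S.seq a 0 := by
    refine S.s1 a 0 0 hA (eff0 S) (eff0 S) (by simpa using eff0 S)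
  rw [add_zero] at h1
  have := congrArg (fun x => x - S.seq a 0) h1
  simpa using this.symm

private lemma zero_seq {a : V} (hA : S.Eff a) : S.seq 0 a = 0 :=
  S.s4 a 0 hA (eff0 S) (seq_zero S hA)

private lemma compat_zero {a : V} (hA : S.Eff a) : S.Compat a 0 := by
  unfold SPS.Compat; rw [seq_zero S hA, zero_seq S hA]

private lemma seq_unit {a : V} (hA : S.Eff a) : S.seq a S.unit = a := by
  have h := S.s6a a 0 hA (eff0 S) (compat_zero S hA)
  rw [sub_zero] at h
  rw [h, S.s3 a hA]

private lemma seq_split {x b : V} (hX : S.Eff x) (hB : S.Eff b) :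
    x = S.seq x b + S.seq x (S.unit - b) := by
  have h1 : S.seq x (b + (S.unit - b)) = S.seq x b + S.seq x (S.unit - b) :=
    S.s1 x b (S.unit - b) hX hB (effCompl S hB)
      (by rw [show b + (S.unit - b) = S.unit by abel]; exact S.eff_unit)
  rw [show b + (S.unit - b) = S.unit by abel] at h1
  rw [← h1, seq_unit S hX]

private lemma seq_le_left {x b : V} (hX : S.Eff x) (hB : S.Eff b) :
    S.seq x b ≤ x := by
  have h := seq_split S hX hB
  have hnn : 0 ≤ S.seq x (S.unit - b) :=
    eff_nonneg S (S.seq_eff x _ hX (effCompl S hB))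
  calc S.seq x b = S.seq x b + 0 := by rw [add_zero]
    _ ≤ S.seq x b + S.seq x (S.unit - b) := by
        have := addR S (S.seq x b) hnn
        simpa [add_comm] using this
    _ = x := h.symm

private lemma seq_mono2 {x b c : V} (hX : S.Eff x) (hB : S.Eff b) (hC : S.Eff c)
    (h : b ≤ c) : S.seq x b ≤ S.seq x c := by
  have h1 : S.seq x (b + (c - b)) = S.seq x b + S.seq x (c - b) :=
    S.s1 x b (c - b) hX hB (effSub S hC hB h)
      (by rw [show b + (c - b) = c by abel]; exact hC)
  rw [show b + (c - b) = c by abel] at h1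
  have hnn : 0 ≤ S.seq x (c - b) := eff_nonneg S (S.seq_eff x _ hX (effSub S hC hB h))
  calc S.seq x b = S.seq x b + 0 := by rw [add_zero]
    _ ≤ S.seq x b + S.seq x (c - b) := by
        have := addR S (S.seq x b) hnn
        simpa [add_comm] using this
    _ = S.seq x c := h1.symm

/-- If `p` is sharp (idempotent) and `b ≤ p`, then `p & b = b`, `b & p = b`, and
`b` is compatible with `p`. -/
private lemma sharp_absorb {p b : V} (hp : S.SharpI p) (hB : S.Eff b) (h : b ≤ p) :
    S.seq p b = b ∧ S.Compat b p := by
  obtain ⟨hpE, hpI⟩ := hp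
  have hp' : S.Eff (S.unit - p) := effCompl S hpE
  have hsplit := seq_split S hpE hpE
  rw [hpI] at hsplit
  have hpp' : S.seq p (S.unit - p) = 0 := by
    have := congrArg (fun x => x - p) hsplit
    simpa using this.symm
  have hp'p : S.seq (S.unit - p) p = 0 := S.s4 p (S.unit - p) hpE hp' hpp'
  have hp'b : S.seq (S.unit - p) b = 0 := by
    have h1 : S.seq (S.unit - p) b ≤ S.seq (S.unit - p) p :=
      seq_mono2 S hp' hB hpE h
    rw [hp'p] at h1
    exact le_antisymm h1 (eff_nonneg S (S.seq_eff _ _ hp' hB))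
  have hbp' : S.seq b (S.unit - p) = 0 := S.s4 (S.unit - p) b hp' hB hp'b
  have hcompat' : S.Compat b (S.unit - p) := by
    unfold SPS.Compat; rw [hbp', hp'b]
  have hcompat : S.Compat b p := by
    have := S.s6a b (S.unit - p) hB hp' hcompat'
    rw [show S.unit - (S.unit - p) = p by abel] at this
    exact this
  have hbp : S.seq b p = b := by
    have h2 := seq_split S hB hpE
    rw [hbp', add_zero] at h2
    exact h2.symm
  exact ⟨by rw [← hcompat]; exact hbp, hcompat⟩

end Helpers

/-- if `p` and `a` are sharp and compatible, then `p & a` is sharp and is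
the greatest lower bound of `p` and `a` among effects. -/
theorem sharp_compat_seq_inf {V : Type*} [NormedAddCommGroup V] [NormedSpace ℝ V]
    [PartialOrder V] (S : SPS V) (p a : V) (hp : S.SharpI p) (ha : S.SharpI a)
    (h : S.Compat p a) :
    S.SharpI (S.seq p a) ∧ S.seq p a ≤ p ∧ S.seq p a ≤ a ∧
      ∀ b : V, S.Eff b → b ≤ p → b ≤ a → b ≤ S.seq p a := by
  obtain ⟨hpE, hpI⟩ := hp
  obtain ⟨haE, haI⟩ := ha
  have hqE : S.Eff (S.seq p a) := S.seq_eff p a hpE haE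
  set q := S.seq p a with hq
  -- q is idempotent
  have haq : S.seq a q = q := by
    have h1 : S.seq a (S.seq a p) = S.seq (S.seq a a) p :=
      S.s5 a a p haE haE hpE rfl
    rw [haI] at h1
    calc S.seq a q = S.seq a (S.seq a p) := by rw [hq, h]
      _ = S.seq a p := h1
      _ = q := by rw [hq, h]
  have hqq : S.seq q q = q := by
    have h1 : S.seq p (S.seq a q) = S.seq (S.seq p a) q :=
      S.s5 p a q hpE haE hqE h
    have h2 : S.seq p (S.seq p a) = S.seq (S.seq p p) a :=
      S.s5 p p a hpE hpE haE rfl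
    rw [hpI] at h2
    calc S.seq q q = S.seq p (S.seq a q) := h1.symm
      _ = S.seq p q := by rw [haq]
      _ = S.seq p (S.seq p a) := by rw [hq]
      _ = S.seq p a := h2
      _ = q := hq.symm
  have hqp : q ≤ p := seq_le_left S hpE haE
  have hqa : q ≤ a := by
    rw [hq, h]; exact seq_le_left S haE hpE
  refine ⟨⟨hqE, hqq⟩, hqp, hqa, ?_⟩
  intro b hB hbp hba
  have h1 : S.seq p b = b := (sharp_absorb S ⟨hpE, hpI⟩ hB hbp).1
  have h2 : S.seq a b = b := (sharp_absorb S ⟨haE, haI⟩ hB hba).1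
  have h3 : S.seq p (S.seq a b) = S.seq (S.seq p a) b :=
    S.s5 p a b hpE haE hB h
  have hqb : S.seq q b = b := by
    rw [hq, ← h3, h2, h1]
  have : S.seq q b ≤ S.seq q S.unit :=
    seq_mono2 S hqE hB S.eff_unit (eff_le_unit S hB)
  rw [hqb, seq_unit S hqE] at this
  exact this
end

section
/- In a finite-dimensional sequential product space, every effect a admits a spectral decomposition: there exist pairwise orthogonal sharp effects p_1,…,p_n (meaning p_i & p_j = 0 for i ≠ j), each compatible with a, and positive scalars λ_1,…,λ_n such that a = Σ_i λ_i p_i. -/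
open scoped BigOperators

/-!
For an effect `b` of norm one, the sequential powers `b, b & b, b & (b & b), …` decrease, so by
compactness of the effect interval they converge; the limit `p` is sharp, lies below `b`, and still
has norm one because `‖x & x‖ ≥ 2‖x‖ - 1` keeps the powers `b^(2^k)` at norm one. Applied to
`b = a / ‖a‖` this peels off `‖a‖ • p` from an effect `a` lying below a sharp effect `u`, and the
remainder lies below the sharp effect `u - p`. The recursion terminates because `p` belongs to the
order ideal generated by `u` but not to the one generated by `u - p`, so the dimension of that ideal
drops at every step.
-/

open Filter Topology

theorem Antitone.exists_tendsto_of_isCompact {X : Type*} [TopologicalSpace X] [PartialOrder X]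
    [OrderClosedTopology X] {s : Set X} {f : ℕ → X} (hf : Antitone f) (hs : IsCompact s)
    (hfs : ∀ n, f n ∈ s) : ∃ x ∈ s, Tendsto f atTop (𝓝 x) := by
  have lower : ∀ x, MapClusterPt x atTop f → ∀ n, x ≤ f n := fun x hx n =>
    isClosed_Iic.mem_of_mapClusterPt hx ((eventually_ge_atTop n).mono fun _ hm => hf hm)
  have upper : ∀ x y, MapClusterPt x atTop f → (∀ n, y ≤ f n) → y ≤ x := fun x y hx hy =>
    isClosed_Ici.mem_of_mapClusterPt hx (Eventually.of_forall hy)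
  obtain ⟨x, hxs, hx⟩ := hs.exists_mapClusterPt (f := atTop) (u := f)
    (tendsto_principal.2 (Eventually.of_forall hfs))
  exact ⟨x, hxs, hs.tendsto_nhds_of_unique_mapClusterPt (Eventually.of_forall hfs)
    fun y _ hy => le_antisymm (upper x y hx (lower y hy)) (upper y x hy (lower x hx))⟩

section OrderIdeal

variable {V : Type*} [AddCommGroup V] [PartialOrder V] [IsOrderedAddMonoid V] [Module ℝ V]
  [PosSMulMono ℝ V]

def orderIdeal (u : V) : Submodule ℝ V where
  carrier := {x | ∃ r : ℝ, -(r • u) ≤ x ∧ x ≤ r • u}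
  add_mem' := by
    rintro x y ⟨r, hr₁, hr₂⟩ ⟨s, hs₁, hs₂⟩
    refine ⟨r + s, ?_, ?_⟩ <;> rw [add_smul]
    · rw [neg_add]; exact add_le_add hr₁ hs₁
    · exact add_le_add hr₂ hs₂
  zero_mem' := ⟨0, by simp⟩
  smul_mem' := by
    rintro c x ⟨r, h₁, h₂⟩
    rcases le_total 0 c with hc | hc
    · refine ⟨c * r, ?_, ?_⟩ <;> rw [mul_smul]
      · simpa using smul_le_smul_of_nonneg_left h₁ hc
      · exact smul_le_smul_of_nonneg_left h₂ hc
    · refine ⟨-c * r, ?_, ?_⟩ <;> rw [mul_smul]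
      · simpa using smul_le_smul_of_nonpos_left h₂ hc
      · simpa using smul_le_smul_of_nonpos_left h₁ hc

lemma mem_orderIdeal_of_le {u x : V} (h0 : 0 ≤ x) (h : x ≤ u) : x ∈ orderIdeal u :=
  ⟨1, by simpa using (neg_nonpos.2 (h0.trans h)).trans h0, by simpa using h⟩

lemma orderIdeal_mono {u v : V} (h0 : 0 ≤ v) (h : v ≤ u) : orderIdeal v ≤ orderIdeal u := by
  rintro x ⟨r, h₁, h₂⟩
  have hv : r • v ≤ |r| • u :=
    (smul_le_smul_of_nonneg_right (le_abs_self r) h0).trans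
      (smul_le_smul_of_nonneg_left h (abs_nonneg r))
  exact ⟨|r|, (neg_le_neg hv).trans h₁, h₂.trans hv⟩

end OrderIdeal

namespace SPS

variable {V : Type*} [NormedAddCommGroup V] [NormedSpace ℝ V] [PartialOrder V]

lemma isOrderedAddMonoid (S : SPS V) : IsOrderedAddMonoid V :=
  ⟨fun a b h c => S.add_le_add_right' a b c h, fun a b h c => by
    simpa only [add_comm c] using S.add_le_add_right' a b c h⟩

lemma posSMulMono (S : SPS V) : PosSMulMono ℝ V :=
  ⟨fun r hr _ _ h => S.smul_le_smul' r _ _ hr h⟩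

variable (S : SPS V)

lemma eff_nonneg {a : V} (ha : S.Eff a) : 0 ≤ a := ((S.eff_iff a).1 ha).1

lemma eff_le_unit {a : V} (ha : S.Eff a) : a ≤ S.unit := ((S.eff_iff a).1 ha).2

lemma unit_nonneg : 0 ≤ S.unit := S.eff_nonneg S.eff_unit

lemma eff_of_le {a b : V} (h0 : 0 ≤ a) (hb : S.Eff b) (h : a ≤ b) : S.Eff a :=
  (S.eff_iff a).2 ⟨h0, h.trans (S.eff_le_unit hb)⟩

lemma eff_zero : S.Eff 0 := S.eff_of_le le_rfl S.eff_unit S.unit_nonneg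

lemma norm_le_of_neg_le_of_le {a : V} {r : ℝ} (hr : 0 ≤ r) (h1 : -(r • S.unit) ≤ a)
    (h2 : a ≤ r • S.unit) : ‖a‖ ≤ r := by
  rw [S.norm_def]
  exact csInf_le ⟨0, fun _ h => h.1⟩ ⟨hr, h1, h2⟩

lemma seq_nonneg {a b : V} (ha : S.Eff a) (hb : S.Eff b) : 0 ≤ S.seq a b :=
  S.eff_nonneg (S.seq_eff a b ha hb)

lemma compat_of_seq_eq_zero {a b : V} (ha : S.Eff a) (hb : S.Eff b) (h : S.seq a b = 0) :
    S.Compat a b := by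
  rw [Compat, h, S.s4 a b ha hb h]

lemma sharpI_unit : S.SharpI S.unit := ⟨S.eff_unit, S.s3 _ S.eff_unit⟩

def seqPow (b : V) : ℕ → V
  | 0 => S.unit
  | n + 1 => S.seq b (seqPow b n)

lemma eff_seqPow {b : V} (hb : S.Eff b) : ∀ n, S.Eff (S.seqPow b n)
  | 0 => S.eff_unit
  | n + 1 => S.seq_eff _ _ hb (eff_seqPow hb n)

def IsSpectralDecomposition (a : V) {n : ℕ} (p : Fin n → V) (l : Fin n → ℝ) : Prop :=
  (∀ i, S.SharpI (p i)) ∧ (∀ i j, i ≠ j → S.seq (p i) (p j) = 0) ∧ (∀ i, S.Compat a (p i)) ∧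
    (∀ i, 0 < l i) ∧ a = ∑ i, l i • p i

lemma isSpectralDecomposition_zero :
    S.IsSpectralDecomposition 0 (Fin.elim0 : Fin 0 → V) Fin.elim0 :=
  ⟨nofun, nofun, nofun, nofun, by simp⟩

-- These hold for every `S` (`S.isOrderedAddMonoid`, `S.posSMulMono`); taking them as instances
-- makes Mathlib's ordered-module lemmas available.
variable [IsOrderedAddMonoid V]

lemma eff_sub {a b : V} (ha : S.Eff a) (hb : S.Eff b) (h : a ≤ b) : S.Eff (b - a) :=
  S.eff_of_le (sub_nonneg.2 h) hb (sub_le_self b (S.eff_nonneg ha))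

lemma eff_unit_sub {a : V} (ha : S.Eff a) : S.Eff (S.unit - a) :=
  S.eff_sub ha S.eff_unit (S.eff_le_unit ha)

lemma le_of_forall_pos_le_add_smul_unit {a b : V} (h : ∀ ε : ℝ, 0 < ε → a ≤ b + ε • S.unit) :
    a ≤ b :=
  sub_nonpos.1 <| S.arch _ fun n => sub_le_iff_le_add'.2 (h _ (by positivity))

lemma seq_zero {a : V} (ha : S.Eff a) : S.seq a 0 = 0 := by
  simpa using S.s1 a 0 0 ha S.eff_zero S.eff_zero (by simpa using S.eff_zero)

lemma seq_sub {a b c : V} (ha : S.Eff a) (hb : S.Eff b) (hc : S.Eff c) (h : b ≤ c) :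
    S.seq a (c - b) = S.seq a c - S.seq a b := by
  rw [eq_sub_iff_add_eq, ← S.s1 a _ _ ha (S.eff_sub hb hc h) hb (by simpa using hc),
    sub_add_cancel]

lemma seq_mono {a b c : V} (ha : S.Eff a) (hb : S.Eff b) (hc : S.Eff c) (h : b ≤ c) :
    S.seq a b ≤ S.seq a c :=
  sub_nonneg.1 (S.seq_sub ha hb hc h ▸ S.seq_nonneg ha (S.eff_sub hb hc h))

lemma seq_unit {a : V} (ha : S.Eff a) : S.seq a S.unit = a := by
  have h := S.s6b a a (S.unit - a) ha ha (S.eff_unit_sub ha) (by simpa using S.eff_unit) rfl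
    (S.s6a a a ha ha rfl)
  rw [add_sub_cancel] at h
  rw [h, S.s3 a ha]

lemma seq_le_left {a b : V} (ha : S.Eff a) (hb : S.Eff b) : S.seq a b ≤ a :=
  (S.seq_mono ha hb S.eff_unit (S.eff_le_unit hb)).trans_eq (S.seq_unit ha)

lemma seq_unit_sub {a b : V} (ha : S.Eff a) (hb : S.Eff b) :
    S.seq a (S.unit - b) = a - S.seq a b := by
  rw [S.seq_sub ha hb S.eff_unit (S.eff_le_unit hb), S.seq_unit ha]

lemma sharpI_unit_sub {p : V} (hp : S.SharpI p) : S.SharpI (S.unit - p) := by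
  have h : S.seq p (S.unit - p) = 0 := by rw [S.seq_unit_sub hp.1 hp.1, hp.2, sub_self]
  refine ⟨S.eff_unit_sub hp.1, ?_⟩
  rw [S.seq_unit_sub (S.eff_unit_sub hp.1) hp.1, S.s4 _ _ hp.1 (S.eff_unit_sub hp.1) h, sub_zero]

lemma seq_eq_zero_of_le_unit_sub {p x : V} (hp : S.SharpI p) (hx : S.Eff x)
    (h : x ≤ S.unit - p) : S.seq p x = 0 := by
  refine le_antisymm ?_ (S.seq_nonneg hp.1 hx)
  simpa [S.seq_unit_sub hp.1 hp.1, hp.2] using S.seq_mono hp.1 hx (S.eff_unit_sub hp.1) h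

lemma le_unit_sub_of_seq_eq_zero {p x : V} (hp : S.SharpI p) (hx : S.Eff x)
    (h : S.seq p x = 0) : x ≤ S.unit - p := by
  have h' : S.seq x p = 0 := S.s4 p x hp.1 hx h
  have hc : S.Compat x (S.unit - p) := S.s6a x p hx hp.1 (by rw [h, h'])
  calc x = S.seq x (S.unit - p) := by rw [S.seq_unit_sub hx hp.1, h', sub_zero]
    _ = S.seq (S.unit - p) x := hc
    _ ≤ S.unit - p := S.seq_le_left (S.eff_unit_sub hp.1) hx

lemma seq_eq_self_of_le_sharpI {u x : V} (hu : S.SharpI u) (hx : S.Eff x) (h : x ≤ u) :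
    S.seq x u = x := by
  have h1 : S.seq (S.unit - u) x = 0 :=
    S.seq_eq_zero_of_le_unit_sub (S.sharpI_unit_sub hu) hx (by rwa [sub_sub_cancel])
  have h2 := S.s4 _ x (S.eff_unit_sub hu.1) hx h1
  rw [S.seq_unit_sub hx hu.1, sub_eq_zero] at h2
  exact h2.symm

lemma sharp_of_sharpI {p : V} (hp : S.SharpI p) : S.Sharp p :=
  ⟨hp.1, fun x hx hxp hxq => by
    rw [← S.seq_eq_self_of_le_sharpI hp hx hxp]
    exact S.s4 p x hp.1 hx (S.seq_eq_zero_of_le_unit_sub hp hx hxq)⟩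

lemma sharpI_sub {p u : V} (hp : S.SharpI p) (hu : S.SharpI u) (h : p ≤ u) :
    S.SharpI (u - p) := by
  have hq := S.eff_sub hp.1 hu.1 h
  have hpq : S.seq p (u - p) = 0 := by
    rw [S.seq_sub hp.1 hp.1 hu.1 h, S.seq_eq_self_of_le_sharpI hu hp.1 h, hp.2, sub_self]
  refine ⟨hq, ?_⟩
  rw [S.seq_sub hq hp.1 hu.1 h, S.s4 p _ hp.1 hq hpq, sub_zero,
    S.seq_eq_self_of_le_sharpI hu hq (sub_le_self u (S.eff_nonneg hp.1))]

lemma compat_seqPow {b : V} (hb : S.Eff b) : ∀ n, S.Compat b (S.seqPow b n)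
  | 0 => by rw [Compat, seqPow, S.seq_unit hb, S.s3 b hb]
  | n + 1 => S.s7 b b _ hb hb (S.eff_seqPow hb n) rfl (compat_seqPow hb n)

lemma seq_seqPow {b : V} (hb : S.Eff b) :
    ∀ m n, S.seq (S.seqPow b m) (S.seqPow b n) = S.seqPow b (m + n)
  | 0, n => by rw [seqPow, S.s3 _ (S.eff_seqPow hb n), zero_add]
  | m + 1, n => by
    rw [seqPow, ← S.s5 b _ _ hb (S.eff_seqPow hb m) (S.eff_seqPow hb n) (S.compat_seqPow hb m),
      seq_seqPow hb m n, Nat.succ_add]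
    rfl

lemma antitone_seqPow {b : V} (hb : S.Eff b) : Antitone (S.seqPow b) := by
  refine antitone_nat_of_succ_le fun n => ?_
  induction n with
  | zero => exact (S.seq_unit hb).trans_le (S.eff_le_unit hb)
  | succ n ih => exact S.seq_mono hb (S.eff_seqPow hb _) (S.eff_seqPow hb _) ih

variable [PosSMulMono ℝ V]

lemma eff_smul {t : ℝ} (h0 : 0 ≤ t) (h1 : t ≤ 1) {a : V} (ha : S.Eff a) : S.Eff (t • a) :=
  S.eff_of_le (smul_nonneg h0 (S.eff_nonneg ha)) ha (smul_le_of_le_one_left (S.eff_nonneg ha) h1)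

lemma norm_le_of_nonneg_of_le {a : V} {r : ℝ} (hr : 0 ≤ r) (h0 : 0 ≤ a) (h : a ≤ r • S.unit) :
    ‖a‖ ≤ r :=
  S.norm_le_of_neg_le_of_le hr ((neg_nonpos.2 (smul_nonneg hr S.unit_nonneg)).trans h0) h

lemma le_norm_smul_unit (a : V) : a ≤ ‖a‖ • S.unit := by
  refine S.le_of_forall_pos_le_add_smul_unit fun ε hε => ?_
  obtain ⟨r, hr, hlt⟩ := exists_lt_of_csInf_lt (b := ‖a‖ + ε)
    (s := {r : ℝ | 0 ≤ r ∧ -(r • S.unit) ≤ a ∧ a ≤ r • S.unit})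
    (by obtain ⟨n, h⟩ := S.strong a; exact ⟨n, n.cast_nonneg, h⟩)
    (by rw [← S.norm_def]; linarith)
  calc a ≤ r • S.unit := hr.2.2
    _ ≤ (‖a‖ + ε) • S.unit := smul_le_smul_of_nonneg_right hlt.le S.unit_nonneg
    _ = ‖a‖ • S.unit + ε • S.unit := add_smul _ _ _

lemma norm_le_one_of_eff {a : V} (ha : S.Eff a) : ‖a‖ ≤ 1 :=
  S.norm_le_of_nonneg_of_le zero_le_one (S.eff_nonneg ha) (by simpa using S.eff_le_unit ha)

lemma norm_le_norm_of_nonneg_of_le (S : SPS V) {a b : V} (h0 : 0 ≤ a) (h : a ≤ b) :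
    ‖a‖ ≤ ‖b‖ :=
  S.norm_le_of_nonneg_of_le (norm_nonneg b) h0 (h.trans (S.le_norm_smul_unit b))

lemma isClosed_nonneg (S : SPS V) : IsClosed {x : V | 0 ≤ x} := by
  refine isClosed_of_closure_subset fun x hx => S.le_of_forall_pos_le_add_smul_unit fun ε hε => ?_
  obtain ⟨y, hy, hxy⟩ := Metric.mem_closure_iff.1 hx ε hε
  rw [dist_comm, dist_eq_norm] at hxy
  calc 0 ≤ y := hy
    _ = x + (y - x) := by abel
    _ ≤ x + ‖y - x‖ • S.unit := by gcongr; exact S.le_norm_smul_unit _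
    _ ≤ x + ε • S.unit := by gcongr; exact S.unit_nonneg

lemma orderClosedTopology (S : SPS V) : OrderClosedTopology V :=
  ⟨isClosed_le_of_isClosed_nonneg S.isClosed_nonneg⟩

lemma seq_natCast_smul {a z : V} (ha : S.Eff a) (hz : S.Eff z) (m : ℕ)
    (hm : S.Eff ((m : ℝ) • z)) : S.seq a ((m : ℝ) • z) = (m : ℝ) • S.seq a z := by
  induction m with
  | zero => simpa using S.seq_zero ha
  | succ k ih =>
    have hk : S.Eff ((k : ℝ) • z) := S.eff_of_le (smul_nonneg k.cast_nonneg (S.eff_nonneg hz)) hm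
      (smul_le_smul_of_nonneg_right (by simp) (S.eff_nonneg hz))
    rw [Nat.cast_succ, add_smul, one_smul] at hm ⊢
    rw [S.s1 a _ z ha hk hz hm, ih hk, add_smul, one_smul]

lemma seq_natCast_div_smul {a y : V} (ha : S.Eff a) (hy : S.Eff y) {m N : ℕ} (hN : 0 < N)
    (hmN : m ≤ N) : S.seq a (((m : ℝ) / N) • y) = ((m : ℝ) / N) • S.seq a y := by
  have hN' : (0 : ℝ) < N := Nat.cast_pos.2 hN
  have hz : S.Eff ((N : ℝ)⁻¹ • y) :=
    S.eff_smul (by positivity) (inv_le_one_of_one_le₀ (Nat.one_le_cast.2 hN)) hy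
  have hy' : y = (N : ℝ) • (N : ℝ)⁻¹ • y := (smul_inv_smul₀ hN'.ne' y).symm
  have hmz : ((m : ℝ) / N) • y = (m : ℝ) • (N : ℝ)⁻¹ • y := by rw [div_eq_mul_inv, mul_smul]
  have hmz_eff : S.Eff (((m : ℝ) / N) • y) :=
    S.eff_smul (by positivity) (div_le_one_of_le₀ (Nat.cast_le.2 hmN) hN'.le) hy
  conv_rhs => rw [hy', S.seq_natCast_smul ha hz N (hy' ▸ hy), smul_smul,
    div_mul_cancel₀ _ hN'.ne']
  rw [hmz] at hmz_eff ⊢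
  exact S.seq_natCast_smul ha hz m hmz_eff

lemma smul_seq_le_seq_smul {a y : V} (ha : S.Eff a) (hy : S.Eff y) {t : ℝ} (h0 : 0 ≤ t)
    (h1 : t ≤ 1) : t • S.seq a y ≤ S.seq a (t • y) := by
  have := S.orderClosedTopology
  have hlim : Tendsto (fun N : ℕ => ((⌊t * N⌋₊ : ℝ) / N) • S.seq a y) atTop
      (𝓝 (t • S.seq a y)) :=
    ((tendsto_nat_floor_mul_div_atTop h0).comp tendsto_natCast_atTop_atTop).smul_const _
  refine le_of_tendsto hlim ((eventually_gt_atTop 0).mono fun N hN => ?_)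
  have hN' : (0 : ℝ) < N := Nat.cast_pos.2 hN
  have hle : (⌊t * N⌋₊ : ℝ) / N ≤ t := div_le_of_le_mul₀ hN'.le h0 (Nat.floor_le (by positivity))
  have hfloor : ⌊t * N⌋₊ ≤ N := Nat.floor_le_of_le (mul_le_of_le_one_left hN'.le h1)
  rw [← S.seq_natCast_div_smul ha hy hN hfloor]
  exact S.seq_mono ha (S.eff_smul (by positivity) (hle.trans h1) hy) (S.eff_smul h0 h1 hy)
    (smul_le_smul_of_nonneg_right hle (S.eff_nonneg hy))

lemma seq_smul {a y : V} (ha : S.Eff a) (hy : S.Eff y) {t : ℝ} (h0 : 0 ≤ t) (h1 : t ≤ 1) :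
    S.seq a (t • y) = t • S.seq a y := by
  have hsum : S.seq a (t • y) + S.seq a ((1 - t) • y) = S.seq a y := by
    rw [← S.s1 a _ _ ha (S.eff_smul h0 h1 hy) (S.eff_smul (by linarith) (by linarith) hy)
      (by simpa [← add_smul] using hy), ← add_smul, add_sub_cancel, one_smul]
  -- the lower bounds for `t` and for `1 - t` add up to an equality
  refine le_antisymm ?_ (S.smul_seq_le_seq_smul ha hy h0 h1)
  calc S.seq a (t • y) = S.seq a y - S.seq a ((1 - t) • y) := eq_sub_of_add_eq hsum
    _ ≤ S.seq a y - (1 - t) • S.seq a y :=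
        sub_le_sub_left (S.smul_seq_le_seq_smul ha hy (by linarith) (by linarith)) _
    _ = t • S.seq a y := by rw [sub_smul, one_smul, sub_sub_cancel]

lemma seq_le_norm_smul_unit {a x : V} (ha : S.Eff a) (hx : S.Eff x) :
    S.seq a x ≤ ‖x‖ • S.unit :=
  calc S.seq a x ≤ S.seq a (‖x‖ • S.unit) := S.seq_mono ha hx
        (S.eff_smul (norm_nonneg x) (S.norm_le_one_of_eff hx) S.eff_unit) (S.le_norm_smul_unit x)
    _ = ‖x‖ • a := by
        rw [S.seq_smul ha S.eff_unit (norm_nonneg x) (S.norm_le_one_of_eff hx), S.seq_unit ha]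
    _ ≤ ‖x‖ • S.unit := smul_le_smul_of_nonneg_left (S.eff_le_unit ha) (norm_nonneg x)

lemma compat_smul_self_of_sharpI {p : V} (hp : S.SharpI p) {t : ℝ} (h0 : 0 ≤ t) (h1 : t ≤ 1) :
    S.Compat p (t • p) := by
  rw [Compat, S.seq_smul hp.1 hp.1 h0 h1, hp.2,
    S.seq_eq_self_of_le_sharpI hp (S.eff_smul h0 h1 hp.1)
      (smul_le_of_le_one_left (S.eff_nonneg hp.1) h1)]

lemma notMem_orderIdeal_of_le_unit_sub {p q : V} (hp : S.SharpI p) (hp0 : p ≠ 0) (hq0 : 0 ≤ q)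
    (hq : q ≤ S.unit - p) : p ∉ orderIdeal q := by
  rintro ⟨r, -, hr⟩
  have hs : 1 ≤ max r 1 := le_max_right r 1
  have hs0 : 0 < max r 1 := one_pos.trans_le hs
  have hle : (max r 1)⁻¹ • p ≤ q := by
    rw [inv_smul_le_iff_of_pos hs0]
    exact hr.trans (smul_le_smul_of_nonneg_right (le_max_left r 1) hq0)
  have h0 := (S.sharp_of_sharpI hp).2 _ (S.eff_smul (by positivity) (inv_le_one_of_one_le₀ hs) hp.1)
    (smul_le_of_le_one_left (S.eff_nonneg hp.1) (inv_le_one_of_one_le₀ hs)) (hle.trans hq)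
  exact hp0 ((smul_eq_zero.1 h0).resolve_left (inv_ne_zero hs0.ne'))

lemma orderIdeal_sub_lt {p u : V} (hp : S.SharpI p) (hp0 : p ≠ 0) (hu : S.Eff u) (h : p ≤ u) :
    orderIdeal (u - p) < orderIdeal u :=
  SetLike.lt_iff_le_and_exists.2
    ⟨orderIdeal_mono (sub_nonneg.2 h) (sub_le_self u (S.eff_nonneg hp.1)), p,
      mem_orderIdeal_of_le (S.eff_nonneg hp.1) h,
      S.notMem_orderIdeal_of_le_unit_sub hp hp0 (sub_nonneg.2 h)
        (sub_le_sub_right (S.eff_le_unit hu) p)⟩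

lemma isSpectralDecomposition_cons {n : ℕ} {p a : V} {l : ℝ} {q : Fin n → V} {m : Fin n → ℝ}
    (hp : S.SharpI p) (hl : 0 < l) (hl1 : l ≤ 1) (ha : S.Eff a) (hlpa : S.Eff (l • p + a))
    (hap : a ≤ S.unit - p) (hq : ∀ i, q i ≤ S.unit - p) (hd : S.IsSpectralDecomposition a q m) :
    S.IsSpectralDecomposition (l • p + a) (Fin.cons p q) (Fin.cons l m) := by
  obtain ⟨hsharp, horth, hcompat, hpos, hsum⟩ := hd
  have hlp := S.eff_smul hl.le hl1 hp.1
  have hpq i : S.seq p (q i) = 0 := S.seq_eq_zero_of_le_unit_sub hp (hsharp i).1 (hq i)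
  have hqp i : S.seq (q i) p = 0 := S.s4 _ _ hp.1 (hsharp i).1 (hpq i)
  refine ⟨Fin.forall_fin_succ.2 ⟨hp, hsharp⟩, ?_, Fin.forall_fin_succ.2 ⟨?_, fun i => ?_⟩,
    Fin.forall_fin_succ.2 ⟨hl, hpos⟩, by simp [Fin.sum_univ_succ, hsum]⟩
  · intro i j hij
    cases i using Fin.cases <;> cases j using Fin.cases
    · exact absurd rfl hij
    · simpa using hpq _
    · simpa using hqp _
    · simpa using horth _ _ fun h => hij (congrArg Fin.succ h)
  · exact (S.s6b p _ _ hp.1 hlp ha hlpa (S.compat_smul_self_of_sharpI hp hl.le hl1)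
      (S.compat_of_seq_eq_zero hp.1 ha (S.seq_eq_zero_of_le_unit_sub hp ha hap))).symm
  · have hqlp : S.seq (q i) (l • p) = 0 := by
      rw [S.seq_smul (hsharp i).1 hp.1 hl.le hl1, hqp, smul_zero]
    exact (S.s6b _ _ _ (hsharp i).1 hlp ha hlpa (S.compat_of_seq_eq_zero (hsharp i).1 hlp hqlp)
      (hcompat i).symm).symm

lemma two_mul_norm_sub_one_le_norm_seq_self {x : V} (hx : S.Eff x) :
    2 * ‖x‖ - 1 ≤ ‖S.seq x x‖ := by
  have hle : x - (S.unit - x) ≤ S.seq x x := by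
    have h := S.seq_le_left (S.eff_unit_sub hx) hx
    rw [← S.s6a x x hx hx rfl, S.seq_unit_sub hx hx] at h
    exact sub_le_comm.1 h
  have h2 : (2 : ℝ) • x ≤ (‖S.seq x x‖ + 1) • S.unit :=
    calc (2 : ℝ) • x = x - (S.unit - x) + S.unit := by rw [two_smul]; abel
      _ ≤ ‖S.seq x x‖ • S.unit + S.unit := by
          gcongr; exact hle.trans (S.le_norm_smul_unit _)
      _ = (‖S.seq x x‖ + 1) • S.unit := by rw [add_smul, one_smul]
  have := S.norm_le_of_nonneg_of_le (by positivity) (smul_nonneg zero_le_two (S.eff_nonneg hx)) h2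
  rw [norm_smul, Real.norm_two] at this
  linarith

lemma norm_seqPow {b : V} (hb : S.Eff b) (h1 : ‖b‖ = 1) (n : ℕ) : ‖S.seqPow b n‖ = 1 := by
  have hpow : ∀ k, ‖S.seqPow b (2 ^ k)‖ = 1 := by
    intro k
    induction k with
    | zero => simpa [seqPow, S.seq_unit hb] using h1
    | succ k ih =>
      refine le_antisymm (S.norm_le_one_of_eff (S.eff_seqPow hb _)) ?_
      have := S.two_mul_norm_sub_one_le_norm_seq_self (S.eff_seqPow hb (2 ^ k))
      rw [ih, S.seq_seqPow hb, ← two_mul, ← pow_succ'] at this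
      linarith
  refine le_antisymm (S.norm_le_one_of_eff (S.eff_seqPow hb n)) ?_
  calc 1 = ‖S.seqPow b (2 ^ n)‖ := (hpow n).symm
    _ ≤ ‖S.seqPow b n‖ := S.norm_le_norm_of_nonneg_of_le (S.eff_nonneg (S.eff_seqPow hb _))
        (S.antitone_seqPow hb Nat.lt_two_pow_self.le)

lemma sharpI_of_tendsto_seqPow {b p : V} (hb : S.Eff b) (hp : S.Eff p)
    (h : Tendsto (S.seqPow b) atTop (𝓝 p)) : S.SharpI p := by
  have := S.orderClosedTopology
  have hpb : ∀ n, p ≤ S.seqPow b n := (S.antitone_seqPow hb).le_of_tendsto h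
  have hfix : ∀ n, S.seq p (S.seqPow b n) = p := fun n => by
    refine tendsto_nhds_unique (((S.s2 _ (S.eff_seqPow hb n)) p hp).tendsto.comp
      (tendsto_nhdsWithin_iff.2 ⟨h, Eventually.of_forall (S.eff_seqPow hb)⟩)) ?_
    simpa only [Function.comp_def, S.seq_seqPow hb] using h.comp (tendsto_add_atTop_nat n)
  have hgap : ∀ n, p - S.seq p p ≤ ‖S.seqPow b n - p‖ • S.unit := fun n =>
    calc p - S.seq p p = S.seq p (S.seqPow b n - p) := by
          rw [S.seq_sub hp hp (S.eff_seqPow hb n) (hpb n), hfix n]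
      _ ≤ _ := S.seq_le_norm_smul_unit hp (S.eff_sub hp (S.eff_seqPow hb n) (hpb n))
  have hlim : Tendsto (fun n => ‖S.seqPow b n - p‖ • S.unit) atTop (𝓝 0) := by
    simpa using (tendsto_iff_norm_sub_tendsto_zero.1 h).smul_const S.unit
  exact ⟨hp, le_antisymm (S.seq_le_left hp hp)
    (sub_nonpos.1 (ge_of_tendsto hlim (Eventually.of_forall hgap)))⟩

variable [FiniteDimensional ℝ V]

lemma isCompact_setOf_eff : IsCompact {x : V | S.Eff x} := by
  have := S.orderClosedTopology
  rw [show {x : V | S.Eff x} = Set.Icc 0 S.unit from Set.ext S.eff_iff]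
  refine Metric.isCompact_of_isClosed_isBounded isClosed_Icc
    ((Metric.isBounded_closedBall (x := 0) (r := 1)).subset fun x hx => ?_)
  simpa using S.norm_le_one_of_eff ((S.eff_iff x).2 hx)

lemma exists_sharpI_le_norm_eq_one {b : V} (hb : S.Eff b) (h1 : ‖b‖ = 1) :
    ∃ p, S.SharpI p ∧ p ≤ b ∧ ‖p‖ = 1 := by
  have := S.orderClosedTopology
  obtain ⟨p, hp, h⟩ :=
    (S.antitone_seqPow hb).exists_tendsto_of_isCompact S.isCompact_setOf_eff (S.eff_seqPow hb)
  refine ⟨p, S.sharpI_of_tendsto_seqPow hb hp h, ?_, ?_⟩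
  · simpa [seqPow, S.seq_unit hb] using (S.antitone_seqPow hb).le_of_tendsto h 1
  · exact tendsto_nhds_unique h.norm (by simpa only [S.norm_seqPow hb h1] using tendsto_const_nhds)

lemma exists_sharpI_norm_smul_le {u a : V} (hu : S.SharpI u) (ha : S.Eff a) (hau : a ≤ u)
    (ha0 : a ≠ 0) :
    ∃ p, S.SharpI p ∧ p ≠ 0 ∧ p ≤ u ∧ ‖a‖ • p ≤ a ∧ a - ‖a‖ • p ≤ u - p := by
  have hl : 0 < ‖a‖ := norm_pos_iff.2 ha0
  have hl1 : ‖a‖ ≤ 1 := S.norm_le_one_of_eff ha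
  set b := ‖a‖⁻¹ • a
  have hab : a = ‖a‖ • b := (smul_inv_smul₀ hl.ne' a).symm
  have hb : S.Eff b := (S.eff_iff b).2 ⟨smul_nonneg (inv_nonneg.2 hl.le) (S.eff_nonneg ha),
    (inv_smul_le_iff_of_pos hl).2 (S.le_norm_smul_unit a)⟩
  have hb1 : ‖b‖ = 1 := by rw [norm_smul, norm_inv, norm_norm, inv_mul_cancel₀ hl.ne']
  have hbu : b ≤ u := by
    have h0 : S.seq (S.unit - u) a = 0 :=
      S.seq_eq_zero_of_le_unit_sub (S.sharpI_unit_sub hu) ha (by rwa [sub_sub_cancel])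
    rw [hab, S.seq_smul (S.eff_unit_sub hu.1) hb hl.le hl1, smul_eq_zero] at h0
    simpa using S.le_unit_sub_of_seq_eq_zero (S.sharpI_unit_sub hu) hb (h0.resolve_left hl.ne')
  obtain ⟨p, hp, hpb, hp1⟩ := S.exists_sharpI_le_norm_eq_one hb hb1
  refine ⟨p, hp, norm_ne_zero_iff.1 (hp1 ▸ one_ne_zero), hpb.trans hbu,
    (smul_le_smul_of_nonneg_left hpb hl.le).trans_eq hab.symm, ?_⟩
  calc a - ‖a‖ • p = ‖a‖ • (b - p) := by rw [smul_sub, ← hab]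
    _ ≤ b - p := smul_le_of_le_one_left (sub_nonneg.2 hpb) hl1
    _ ≤ u - p := sub_le_sub_right hbu p

theorem exists_isSpectralDecomposition_of_le {u a : V} (hu : S.SharpI u) (ha : S.Eff a)
    (hau : a ≤ u) : ∃ (n : ℕ) (p : Fin n → V) (l : Fin n → ℝ),
      S.IsSpectralDecomposition a p l ∧ ∀ i, p i ≤ u := by
  induction hN : Module.finrank ℝ (orderIdeal u) using Nat.strong_induction_on
    generalizing u a with
  | _ N ih =>
  rcases eq_or_ne a 0 with rfl | ha0
  · exact ⟨0, Fin.elim0, Fin.elim0, S.isSpectralDecomposition_zero, nofun⟩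
  obtain ⟨p, hp, hp0, hpu, hlpa, hrest⟩ := S.exists_sharpI_norm_smul_le hu ha hau ha0
  have hlt := Submodule.finrank_lt_finrank_of_lt (S.orderIdeal_sub_lt hp hp0 hu.1 hpu)
  have ha' : S.Eff (a - ‖a‖ • p) :=
    S.eff_sub (S.eff_smul (norm_nonneg a) (S.norm_le_one_of_eff ha) hp.1) ha hlpa
  obtain ⟨n, q, m, hd, hqu⟩ := ih _ (hN ▸ hlt) (S.sharpI_sub hp hu hpu) ha' hrest rfl
  have hup : u - p ≤ S.unit - p := sub_le_sub_right (S.eff_le_unit hu.1) p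
  refine ⟨n + 1, Fin.cons p q, Fin.cons ‖a‖ m, ?_, Fin.forall_fin_succ.2
    ⟨hpu, fun i => (hqu i).trans (sub_le_self u (S.eff_nonneg hp.1))⟩⟩
  simpa only [add_sub_cancel] using S.isSpectralDecomposition_cons hp (norm_pos_iff.2 ha0)
    (S.norm_le_one_of_eff ha) ha' (by rwa [add_sub_cancel]) (hrest.trans hup)
    (fun i => (hqu i).trans hup) hd

end SPS

/-- spectral decomposition of effects. -/
theorem spectral_decomposition {V : Type*} [NormedAddCommGroup V] [NormedSpace ℝ V]
    [PartialOrder V] [FiniteDimensional ℝ V] (S : SPS V) (a : V) (ha : S.Eff a) :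
    ∃ (n : ℕ) (p : Fin n → V) (l : Fin n → ℝ),
      (∀ i, S.SharpI (p i)) ∧
      (∀ i j, i ≠ j → S.seq (p i) (p j) = 0) ∧
      (∀ i, S.Compat a (p i)) ∧
      (∀ i, 0 < l i) ∧
      a = ∑ i, l i • p i := by
  have := S.isOrderedAddMonoid
  have := S.posSMulMono
  obtain ⟨n, p, l, hd, -⟩ :=
    S.exists_isSpectralDecomposition_of_le S.sharpI_unit ha (S.eff_le_unit ha)
  exact ⟨n, p, l, hd⟩
end
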